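/- arXiv:1302.1392 — 2 statements merged into one kernel-verified Lean document; each statement's English description precedes it below -/
import Mathlib

section
/- Let ρ: G₁ × G₂ → U(H) be a continuous unitary representation of a direct product of topological groups with H^{G₁} = H^{G₂} = {0}, and let α: G₁ × G₂ ↷ H be a continuous affine isometric action with linear part ρ. Then α almost fixes a point: for every ε > 0 and every compact subset Q ⊆ G₁ × G₂ there exists v ∈ H with sup_{g ∈ Q} ‖α(g)v − v‖ < ε. -/
/-!
Statement 3: Let `ρ : G₁ × G₂ → U(H)` be a continuous unitary representation of a direct
product of topological groups with `H^{G₁} = H^{G₂} = {0}`, and let `α : G₁ × G₂ ↷ H` be a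
continuous affine isometric action with linear part `ρ`, `α(g)v = ρ(g)v + b(g)`.
Then `α` almost fixes a point: for every `ε > 0` and every compact `Q ⊆ G₁ × G₂` there is
`v ∈ H` with `sup_{g ∈ Q} ‖α(g)v − v‖ < ε`.
-/

namespace ProductAlmostFix

variable {G₁ G₂ : Type*} [Group G₁] [Group G₂]
variable {H : Type*} [NormedAddCommGroup H] [InnerProductSpace ℂ H]

/-- The `ℝ`-linear map underlying a `ℂ`-linear isometric equivalence. -/
noncomputable def rU (e : H ≃ₗᵢ[ℂ] H) : H →ₗ[ℝ] H :=
  ((e.toLinearEquiv).restrictScalars ℝ).toLinearMap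

@[simp] lemma rU_apply (e : H ≃ₗᵢ[ℂ] H) (x : H) : rU e x = e x := rfl

section Rep

variable (ρ : (G₁ × G₂) →* (H ≃ₗᵢ[ℂ] H)) (b : G₁ × G₂ → H)

lemma mk_comm (g₁ : G₁) (g₂ : G₂) :
    ((g₁, 1) : G₁ × G₂) * ((1 : G₁), g₂) = ((1 : G₁), g₂) * (g₁, (1 : G₂)) := by
  simp [Prod.mk_mul_mk]

lemma rho_apply_mul (g h : G₁ × G₂) (x : H) : ρ (g * h) x = ρ g (ρ h x) := by
  rw [map_mul]
  rfl

lemma rho_comm (g₁ : G₁) (g₂ : G₂) (x : H) :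
    ρ (g₁, 1) (ρ (1, g₂) x) = ρ (1, g₂) (ρ (g₁, 1) x) := by
  rw [← rho_apply_mul, ← rho_apply_mul, mk_comm]

variable (hcoc : ∀ g h : G₁ × G₂, b (g * h) = ρ g (b h) + b g)

include hcoc

lemma haction (g h : G₁ × G₂) (x : H) :
    ρ g (ρ h x + b h) + b g = ρ (g * h) x + b (g * h) := by
  rw [map_add, hcoc g h, rho_apply_mul]
  abel

lemma brel (g₁ : G₁) (g₂ : G₂) :
    ρ (g₁, 1) (b (1, g₂)) = ρ (1, g₂) (b (g₁, 1)) + b (1, g₂) - b (g₁, 1) := by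
  have h1 := hcoc ((g₁, 1) : G₁ × G₂) ((1 : G₁), g₂)
  have h2 := hcoc (((1 : G₁), g₂) : G₁ × G₂) (g₁, (1 : G₂))
  rw [mk_comm, h2] at h1
  -- h1 : ρ (1,g₂) (b (g₁,1)) + b (1,g₂) = ρ (g₁,1) (b (1,g₂)) + b (g₁,1)
  rw [eq_sub_iff_add_eq]
  exact h1.symm

omit hcoc

/-- A "good pair": a contraction commuting with `ρ(1,·)` together with a vector implementing
its action on the cocycle `b(1,·)` as a coboundary correction. -/
def GoodPair (A : H →ₗ[ℝ] H) (v : H) : Prop :=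
  (∀ x : H, ‖A x‖ ≤ ‖x‖) ∧
  (∀ (g₂ : G₂) (x : H), A (ρ (1, g₂) x) = ρ (1, g₂) (A x)) ∧
  (∀ g₂ : G₂, A (b (1, g₂)) = ρ (1, g₂) v + b (1, g₂) - v)

lemma goodPair_id : GoodPair ρ b LinearMap.id 0 :=
  ⟨fun _ => le_rfl, fun _ _ => rfl, fun g₂ => by simp⟩

lemma goodPair_comp {A A' : H →ₗ[ℝ] H} {v v' : H}
    (hA : GoodPair ρ b A v) (hA' : GoodPair ρ b A' v') :
    GoodPair ρ b (A'.comp A) (A' v + v') := by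
  obtain ⟨hA1, hA2, hA3⟩ := hA
  obtain ⟨hA'1, hA'2, hA'3⟩ := hA'
  refine ⟨fun x => (hA'1 _).trans (hA1 x), fun g₂ x => ?_, fun g₂ => ?_⟩
  · simp only [LinearMap.comp_apply, hA2, hA'2]
  · calc A' (A (b (1, g₂))) = A' (ρ (1, g₂) v + b (1, g₂) - v) := by rw [hA3]
      _ = ρ (1, g₂) (A' v) + (ρ (1, g₂) v' + b (1, g₂) - v') - A' v := by
          rw [map_sub, map_add, hA'2, hA'3]
      _ = ρ (1, g₂) (A' v + v') + b (1, g₂) - (A' v + v') := by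
          rw [map_add]; abel

variable {ι : Type*}

noncomputable def elemA (gs : ι → G₁) (w : ι → ℝ) (t : Finset ι) : H →ₗ[ℝ] H :=
  ∑ i ∈ t, w i • rU (ρ (gs i, 1))

lemma elemA_apply (gs : ι → G₁) (w : ι → ℝ) (t : Finset ι) (x : H) :
    elemA ρ gs w t x = ∑ i ∈ t, w i • ρ (gs i, 1) x := by
  simp [elemA, LinearMap.sum_apply, LinearMap.smul_apply]

include hcoc in
lemma goodPair_elem (gs : ι → G₁) (w : ι → ℝ) (t : Finset ι)
    (hw0 : ∀ i ∈ t, 0 ≤ w i) (hw1 : ∑ i ∈ t, w i = 1) :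
    GoodPair ρ b (elemA ρ gs w t) (∑ i ∈ t, w i • b (gs i, 1)) := by
  refine ⟨fun x => ?_, fun g₂ x => ?_, fun g₂ => ?_⟩
  · rw [elemA_apply]
    calc ‖∑ i ∈ t, w i • ρ (gs i, 1) x‖ ≤ ∑ i ∈ t, ‖w i • ρ (gs i, 1) x‖ := norm_sum_le _ _
      _ = ∑ i ∈ t, w i * ‖x‖ := by
          refine Finset.sum_congr rfl fun i hi => ?_
          rw [norm_smul, Real.norm_eq_abs, abs_of_nonneg (hw0 i hi),
            LinearIsometryEquiv.norm_map]
      _ = ‖x‖ := by rw [← Finset.sum_mul, hw1, one_mul]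
  · rw [elemA_apply, elemA_apply]
    have : ρ (1, g₂) (∑ i ∈ t, w i • ρ (gs i, 1) x)
        = rU (ρ (1, g₂)) (∑ i ∈ t, w i • ρ (gs i, 1) x) := rfl
    rw [this, map_sum]
    refine Finset.sum_congr rfl fun i hi => ?_
    rw [map_smul, rU_apply, rho_comm]
  · rw [elemA_apply]
    have hstep : ∀ i ∈ t, w i • ρ (gs i, 1) (b (1, g₂))
        = w i • ρ (1, g₂) (b (gs i, 1)) + w i • b (1, g₂) - w i • b (gs i, 1) := by
      intro i hi
      rw [brel ρ b hcoc, smul_sub, smul_add]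
    rw [Finset.sum_congr rfl hstep, Finset.sum_sub_distrib, Finset.sum_add_distrib]
    have h1 : ∑ i ∈ t, w i • ρ (1, g₂) (b (gs i, 1))
        = ρ (1, g₂) (∑ i ∈ t, w i • b (gs i, 1)) := by
      have : ρ (1, g₂) (∑ i ∈ t, w i • b (gs i, 1))
          = rU (ρ (1, g₂)) (∑ i ∈ t, w i • b (gs i, 1)) := rfl
      rw [this, map_sum]
      exact Finset.sum_congr rfl fun i hi => by rw [map_smul, rU_apply]
    have h2 : ∑ i ∈ t, w i • b (1, g₂) = b (1, g₂) := by
      rw [← Finset.sum_smul, hw1, one_smul]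
    rw [h1, h2]

include hcoc in
lemma exists_goodPair_single
    (hfix₁ : ∀ v : H, (∀ g₁ : G₁, ρ (g₁, 1) v = v) → v = 0) [CompleteSpace H]
    (u : H) {ε : ℝ} (hε : 0 < ε) :
    ∃ (A : H →ₗ[ℝ] H) (v : H), GoodPair ρ b A v ∧ ‖A u‖ < ε := by
  letI : InnerProductSpace ℝ H := InnerProductSpace.complexToReal
  set S : Set H := Set.range (fun g : G₁ => ρ (g, 1) u) with hS
  set K : Set H := closure (convexHull ℝ S) with hK
  have hSne : S.Nonempty := ⟨ρ (1, 1) u, ⟨1, rfl⟩⟩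
  have hKne : K.Nonempty := hSne.mono ((subset_convexHull ℝ S).trans subset_closure)
  have hKconv : Convex ℝ K := (convex_convexHull ℝ S).closure
  have hKcl : IsClosed K := isClosed_closure
  obtain ⟨z, hzK, hz⟩ := exists_norm_eq_iInf_of_complete_convex hKne hKcl.isComplete hKconv 0
  have hvar := (norm_eq_iInf_iff_real_inner_le_zero hKconv hzK).mp hz
  have hinv : ∀ g : G₁, ∀ x ∈ K, ρ (g, 1) x ∈ K := by
    intro g
    have hsub : convexHull ℝ S ⊆ (fun x : H => ρ (g, 1) x) ⁻¹' (convexHull ℝ S) := by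
      apply convexHull_min
      · rintro s ⟨h, rfl⟩
        show ρ (g, 1) (ρ (h, 1) u) ∈ convexHull ℝ S
        refine subset_convexHull ℝ S ⟨g * h, ?_⟩
        show ρ (g * h, 1) u = ρ (g, 1) (ρ (h, 1) u)
        rw [← rho_apply_mul, Prod.mk_mul_mk, mul_one]
      · have := (convex_convexHull ℝ S).linear_preimage (rU (ρ (g, 1)))
        exact this
    intro x hx
    have hmaps : Set.MapsTo (fun x : H => ρ (g, 1) x) K K := by
      have hmt : Set.MapsTo (fun x : H => ρ (g, 1) x) (convexHull ℝ S) (convexHull ℝ S) := hsub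
      exact hmt.closure (ρ (g, 1)).continuous
    exact hmaps hx
  have hfixz : ∀ g : G₁, ρ (g, 1) z = z := by
    intro g
    have hw : ρ (g, 1) z ∈ K := hinv g z hzK
    have h1 := hvar _ hw
    rw [zero_sub, inner_neg_left, inner_sub_right] at h1
    have h2 : (inner ℝ z z : ℝ) ≤ inner ℝ z (ρ (g, 1) z) := by linarith
    have h3 : ‖ρ (g, 1) z - z‖ ^ 2 ≤ 0 := by
      rw [norm_sub_sq_real, LinearIsometryEquiv.norm_map]
      have h4 : (inner ℝ (ρ (g, 1) z) z : ℝ) = inner ℝ z (ρ (g, 1) z) := real_inner_comm _ _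
      have h5 : (inner ℝ z z : ℝ) = ‖z‖ ^ 2 := real_inner_self_eq_norm_sq z
      linarith
    have h6 : ‖ρ (g, 1) z - z‖ = 0 := by
      have := norm_nonneg (ρ (g, 1) z - z)
      nlinarith
    rwa [norm_eq_zero, sub_eq_zero] at h6
  have hz0 : z = 0 := hfix₁ z hfixz
  have h0K : (0 : H) ∈ closure (convexHull ℝ S) := by rw [← hz0]; exact hzK
  obtain ⟨y, hy, hyd⟩ := Metric.mem_closure_iff.mp h0K ε hε
  rw [convexHull_eq] at hy
  obtain ⟨ι', t, w, zf, hw0, hw1, hzS, hcm⟩ := hy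
  have hex : ∀ i ∈ t, ∃ g : G₁, ρ (g, 1) u = zf i := fun i hi => Set.mem_range.mp (hzS i hi)
  classical
  set gs : ι' → G₁ := fun i => if hi : i ∈ t then (hex i hi).choose else 1 with hgsdef
  have hgs : ∀ i ∈ t, ρ (gs i, 1) u = zf i := by
    intro i hi
    rw [hgsdef]
    simp only [dif_pos hi]
    exact (hex i hi).choose_spec
  refine ⟨elemA ρ gs w t, ∑ i ∈ t, w i • b (gs i, 1),
    goodPair_elem ρ b hcoc gs w t hw0 hw1, ?_⟩
  have hAu : elemA ρ gs w t u = y := by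
    rw [elemA_apply, ← hcm, Finset.centerMass_eq_of_sum_1 _ _ hw1]
    exact Finset.sum_congr rfl fun i hi => by rw [hgs i hi]
  rw [hAu]
  rwa [dist_comm, dist_zero_right] at hyd

include hcoc in
lemma exists_goodPair_list
    (hfix₁ : ∀ v : H, (∀ g₁ : G₁, ρ (g₁, 1) v = v) → v = 0) [CompleteSpace H]
    (L : List H) {ε : ℝ} (hε : 0 < ε) :
    ∃ (A : H →ₗ[ℝ] H) (v : H), GoodPair ρ b A v ∧ ∀ u ∈ L, ‖A u‖ < ε := by
  induction L with
  | nil => exact ⟨LinearMap.id, 0, goodPair_id ρ b, by simp⟩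
  | cons u L ih =>
    obtain ⟨A, v, hAv, hA⟩ := ih
    obtain ⟨A', v', hA'v', hA'⟩ := exists_goodPair_single ρ b hcoc hfix₁ (A u) hε
    refine ⟨A'.comp A, A' v + v', goodPair_comp ρ b hAv hA'v', ?_⟩
    intro x hx
    rcases List.mem_cons.mp hx with rfl | hx
    · exact hA'
    · exact lt_of_le_of_lt (hA'v'.1 (A x)) (hA x hx)

include hcoc in
/-- Key lemma: using triviality of `G₁`-fixed vectors, one can almost fix any compact set of
the `G₂`-factor. -/
lemma almost_fix_right [CompleteSpace H] [TopologicalSpace G₂]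
    (hfix₁ : ∀ v : H, (∀ g₁ : G₁, ρ (g₁, 1) v = v) → v = 0)
    (hb2 : Continuous fun g₂ : G₂ => b (1, g₂))
    {ε : ℝ} (hε : 0 < ε) (Q₂ : Set G₂) (hQ₂ : IsCompact Q₂) :
    ∃ v : H, ∀ g₂ ∈ Q₂, ‖ρ (1, g₂) v + b (1, g₂) - v‖ < ε := by
  have hε3 : 0 < ε / 3 := by linarith
  set B : Set H := (fun g₂ : G₂ => b (1, g₂)) '' Q₂ with hBdef
  have hB : IsCompact B := hQ₂.image hb2
  have hcover : B ⊆ ⋃ u ∈ B, Metric.ball u (ε / 3) := fun y hy =>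
    Set.mem_biUnion hy (Metric.mem_ball_self hε3)
  obtain ⟨F, hFB, hFfin, hFcover⟩ :=
    hB.elim_finite_subcover_image (fun u _ => Metric.isOpen_ball) hcover
  obtain ⟨A, v, hAv, hA⟩ :=
    exists_goodPair_list ρ b hcoc hfix₁ hFfin.toFinset.toList hε3
  refine ⟨v, fun g₂ hg₂ => ?_⟩
  have hy : b (1, g₂) ∈ B := ⟨g₂, hg₂, rfl⟩
  obtain ⟨u, hu, hball⟩ := Set.mem_iUnion₂.mp (hFcover hy)
  have hdist : ‖b (1, g₂) - u‖ < ε / 3 := by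
    rw [← dist_eq_norm]; exact hball
  have huL : u ∈ hFfin.toFinset.toList := by
    rw [Finset.mem_toList, Set.Finite.mem_toFinset]; exact hu
  calc ‖ρ (1, g₂) v + b (1, g₂) - v‖ = ‖A (b (1, g₂))‖ := by rw [hAv.2.2 g₂]
    _ = ‖A (b (1, g₂) - u) + A u‖ := by rw [map_sub, sub_add_cancel]
    _ ≤ ‖A (b (1, g₂) - u)‖ + ‖A u‖ := norm_add_le _ _
    _ ≤ ‖b (1, g₂) - u‖ + ‖A u‖ := add_le_add (hAv.1 _) le_rfl
    _ < ε / 3 + ε / 3 := add_lt_add hdist (hA u huL)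
    _ < ε := by linarith

end Rep

end ProductAlmostFix

open ProductAlmostFix

theorem product_affine_action_almost_fixes_point
    {G₁ : Type*} [Group G₁] [TopologicalSpace G₁] [IsTopologicalGroup G₁]
    {G₂ : Type*} [Group G₂] [TopologicalSpace G₂] [IsTopologicalGroup G₂]
    {H : Type*} [NormedAddCommGroup H] [InnerProductSpace ℂ H] [CompleteSpace H]
    -- a unitary representation of the product:
    (ρ : (G₁ × G₂) →* (H ≃ₗᵢ[ℂ] H))
    -- with norm-continuous orbit maps:
    (hcont : ∀ v : H, Continuous fun g : G₁ × G₂ => ρ g v)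
    -- `H^{G₁} = {0}`:
    (hfix₁ : ∀ v : H, (∀ g₁ : G₁, ρ (g₁, 1) v = v) → v = 0)
    -- `H^{G₂} = {0}`:
    (hfix₂ : ∀ v : H, (∀ g₂ : G₂, ρ (1, g₂) v = v) → v = 0)
    -- the translation part of the affine action `α(g)v = ρ(g)v + b(g)`:
    (b : G₁ × G₂ → H) (hb : Continuous b)
    -- the affine cocycle identity, making `α` an action:
    (hcoc : ∀ g h : G₁ × G₂, b (g * h) = ρ g (b h) + b g) :
    -- conclusion: `α` almost fixes a point
    ∀ ε > (0 : ℝ), ∀ Q : Set (G₁ × G₂), IsCompact Q →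
      ∃ v : H, ∀ g ∈ Q, ‖(ρ g v + b g) - v‖ < ε := by
  intro ε hε Q hQ
  classical
  letI : InnerProductSpace ℝ H := InnerProductSpace.complexToReal
  set δ : ℝ := ε / 3 with hδdef
  have hδ : 0 < δ := by rw [hδdef]; linarith
  set Q₁ : Set G₁ := Prod.fst '' Q with hQ₁def
  set Q₂ : Set G₂ := Prod.snd '' Q with hQ₂def
  have hQ₁ : IsCompact Q₁ := hQ.image continuous_fst
  have hQ₂ : IsCompact Q₂ := hQ.image continuous_snd
  -- a point almost fixed by `Q₂`
  obtain ⟨v₀, hv₀⟩ := almost_fix_right ρ b hcoc hfix₁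
    (hb.comp (Continuous.prodMk_right (1 : G₁))) hδ Q₂ hQ₂
  -- a point almost fixed by `Q₁`, via the swapped product
  set σ : (G₂ × G₁) →* (G₁ × G₂) := (MulEquiv.prodComm : G₂ × G₁ ≃* G₁ × G₂).toMonoidHom with hσ
  set ρ' : (G₂ × G₁) →* (H ≃ₗᵢ[ℂ] H) := ρ.comp σ with hρ'
  set b' : G₂ × G₁ → H := fun g => b (σ g) with hb'def
  have hcoc' : ∀ g h : G₂ × G₁, b' (g * h) = ρ' g (b' h) + b' g := by
    intro g h
    show b (σ (g * h)) = ρ (σ g) (b (σ h)) + b (σ g)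
    rw [map_mul]
    exact hcoc _ _
  have hfix' : ∀ v : H, (∀ g₂ : G₂, ρ' (g₂, 1) v = v) → v = 0 := by
    intro v hv
    exact hfix₂ v fun g₂ => hv g₂
  have hb'cont : Continuous fun g₁ : G₁ => b' (1, g₁) := by
    show Continuous fun g₁ : G₁ => b (g₁, 1)
    exact hb.comp (Continuous.prodMk_left (1 : G₂))
  obtain ⟨v₁, hv₁⟩ := almost_fix_right ρ' b' hcoc' hfix' hb'cont hδ Q₁ hQ₁
  have hv₁' : ∀ g₁ ∈ Q₁, ‖ρ (g₁, 1) v₁ + b (g₁, 1) - v₁‖ < δ := by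
    intro g₁ hg₁
    exact hv₁ g₁ hg₁
  -- the closed convex set of `Q₂`-almost fixed points
  set C : Set H := {w : H | ∀ g₂ ∈ Q₂, ‖ρ (1, g₂) w + b (1, g₂) - w‖ ≤ δ} with hCdef
  have hCne : C.Nonempty := ⟨v₀, fun g₂ hg₂ => (hv₀ g₂ hg₂).le⟩
  have hCcl : IsClosed C := by
    have hCeq : C = ⋂ g₂ ∈ Q₂, {w : H | ‖ρ (1, g₂) w + b (1, g₂) - w‖ ≤ δ} := by
      ext w
      simp only [hCdef, Set.mem_setOf_eq, Set.mem_iInter]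
    rw [hCeq]
    refine isClosed_biInter fun g₂ _ => ?_
    have hc : Continuous fun w : H => ‖ρ (1, g₂) w + b (1, g₂) - w‖ :=
      (((ρ (1, g₂)).continuous.add continuous_const).sub continuous_id).norm
    exact isClosed_le hc continuous_const
  have hCconv : Convex ℝ C := by
    intro x hx y hy a c ha hc hac
    intro g₂ hg₂
    have hmap : ρ (1, g₂) (a • x + c • y) = a • ρ (1, g₂) x + c • ρ (1, g₂) y := by
      show rU (ρ (1, g₂)) (a • x + c • y) = _
      rw [map_add, map_smul, map_smul]
      rfl
    have key : ρ (1, g₂) (a • x + c • y) + b (1, g₂) - (a • x + c • y)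
        = a • (ρ (1, g₂) x + b (1, g₂) - x) + c • (ρ (1, g₂) y + b (1, g₂) - y) := by
      have hc1 : c = 1 - a := by linarith
      subst hc1
      rw [hmap]
      module
    rw [key]
    calc ‖a • (ρ (1, g₂) x + b (1, g₂) - x) + c • (ρ (1, g₂) y + b (1, g₂) - y)‖
        ≤ ‖a • (ρ (1, g₂) x + b (1, g₂) - x)‖ + ‖c • (ρ (1, g₂) y + b (1, g₂) - y)‖ :=
          norm_add_le _ _
      _ = a * ‖ρ (1, g₂) x + b (1, g₂) - x‖ + c * ‖ρ (1, g₂) y + b (1, g₂) - y‖ := by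
          rw [norm_smul, norm_smul, Real.norm_eq_abs, Real.norm_eq_abs,
            abs_of_nonneg ha, abs_of_nonneg hc]
      _ ≤ a * δ + c * δ :=
          add_le_add (mul_le_mul_of_nonneg_left (hx g₂ hg₂) ha)
            (mul_le_mul_of_nonneg_left (hy g₂ hg₂) hc)
      _ = δ := by rw [← add_mul, hac, one_mul]
  -- project v₁ onto C
  obtain ⟨p, hpC, hpmin⟩ := exists_norm_eq_iInf_of_complete_convex hCne hCcl.isComplete hCconv v₁
  have hvar := (norm_eq_iInf_iff_real_inner_le_zero hCconv hpC).mp hpmin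
  have hb1 : b (1 : G₁ × G₂) = 0 := by
    have h := hcoc 1 1
    rw [mul_one] at h
    have h0 : ρ (1 : G₁ × G₂) (b 1) = 0 := (right_eq_add.mp h)
    rw [map_one] at h0
    simpa using h0
  have hCinv : ∀ (h₁ : G₁) (w : H), w ∈ C → (ρ (h₁, 1) w + b (h₁, 1)) ∈ C := by
    intro h₁ w hw g₂ hg₂
    have hcomp : ρ (1, g₂) (ρ (h₁, 1) w + b (h₁, 1)) + b (1, g₂) - (ρ (h₁, 1) w + b (h₁, 1))
        = ρ (h₁, 1) (ρ (1, g₂) w + b (1, g₂) - w) := by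
      have h1 := haction ρ b hcoc ((1 : G₁), g₂) (h₁, (1 : G₂)) w
      have h2 := haction ρ b hcoc (h₁, (1 : G₂)) ((1 : G₁), g₂) w
      rw [← mk_comm] at h1
      rw [← h2] at h1
      rw [h1, map_sub]
      abel
    rw [hcomp, LinearIsometryEquiv.norm_map]
    exact hw g₂ hg₂
  have hinner_map : ∀ (g : G₁ × G₂) (x y : H), (inner ℝ (ρ g x) (ρ g y) : ℝ) = inner ℝ x y := by
    intro g x y
    calc (inner ℝ (ρ g x) (ρ g y) : ℝ) = RCLike.re (inner (𝕜 := ℂ) (ρ g x) (ρ g y)) := rfl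
      _ = RCLike.re (inner (𝕜 := ℂ) x y) := by rw [LinearIsometryEquiv.inner_map_map]
      _ = inner ℝ x y := rfl
  have hkey : ∀ g₁ : G₁, ‖ρ (g₁, 1) p + b (g₁, 1) - p‖ ≤ ‖ρ (g₁, 1) v₁ + b (g₁, 1) - v₁‖ := by
    intro g₁
    set u : H := ρ (g₁, 1) p + b (g₁, 1) - p with hu
    set d : H := ρ (g₁, 1) v₁ + b (g₁, 1) - v₁ with hd
    have hTp := hCinv g₁ p hpC
    have hTinvp := hCinv g₁⁻¹ p hpC
    have h1 : (inner ℝ (v₁ - p) u : ℝ) ≤ 0 := by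
      have h := hvar _ hTp
      rw [hu]
      rw [show (ρ (g₁, 1) p + b (g₁, 1) - p : H)
        = (ρ (g₁, 1) p + b (g₁, 1)) - p from rfl]
      exact h
    have hback : ρ (g₁, 1) (ρ (g₁⁻¹, 1) p + b (g₁⁻¹, 1)) + b (g₁, 1) = p := by
      have h := haction ρ b hcoc (g₁, (1 : G₂)) (g₁⁻¹, (1 : G₂)) p
      rw [Prod.mk_mul_mk, mul_inv_cancel, one_mul] at h
      have hone : ((1, 1) : G₁ × G₂) = 1 := rfl
      rw [hone, map_one, hb1, add_zero] at h
      simpa using h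
    have h2 := hvar _ hTinvp
    have h2' : (inner ℝ (ρ (g₁, 1) (v₁ - p))
        (ρ (g₁, 1) ((ρ (g₁⁻¹, 1) p + b (g₁⁻¹, 1)) - p)) : ℝ) ≤ 0 := by
      rw [hinner_map]
      exact h2
    have h2'' : (inner ℝ (ρ (g₁, 1) v₁ - ρ (g₁, 1) p) (-u) : ℝ) ≤ 0 := by
      have e1 : ρ (g₁, 1) (v₁ - p) = ρ (g₁, 1) v₁ - ρ (g₁, 1) p := map_sub _ _ _
      have e3 : ρ (g₁, 1) (ρ (g₁⁻¹, 1) p + b (g₁⁻¹, 1)) = p - b (g₁, 1) := by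
        rw [eq_sub_iff_add_eq]
        exact hback
      have e2 : ρ (g₁, 1) ((ρ (g₁⁻¹, 1) p + b (g₁⁻¹, 1)) - p) = -u := by
        rw [map_sub, e3, hu]
        abel
      rw [e1, e2] at h2'
      exact h2'
    have h3 : 0 ≤ (inner ℝ (ρ (g₁, 1) v₁ - ρ (g₁, 1) p) u : ℝ) := by
      rw [inner_neg_right] at h2''
      linarith
    have h4 : 0 ≤ (inner ℝ (p - v₁) u : ℝ) := by
      have h := h1
      rw [show (v₁ - p : H) = -(p - v₁) from by abel, inner_neg_left] at h
      linarith
    have h5 : 0 ≤ (inner ℝ (d - u) u : ℝ) := by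
      have e4 : (d - u : H) = (ρ (g₁, 1) v₁ - ρ (g₁, 1) p) + (p - v₁) := by
        rw [hd, hu]
        abel
      rw [e4, inner_add_left]
      linarith
    have h6 : (inner ℝ u u : ℝ) ≤ inner ℝ d u := by
      rw [inner_sub_left] at h5
      linarith
    have h7 : ‖u‖ * ‖u‖ ≤ ‖d‖ * ‖u‖ := by
      have hle := real_inner_le_norm d u
      have h8 : (inner ℝ u u : ℝ) = ‖u‖ * ‖u‖ := real_inner_self_eq_norm_mul_norm u
      linarith
    rcases eq_or_lt_of_le (norm_nonneg u) with h9 | h9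
    · exact h9 ▸ norm_nonneg d
    · exact le_of_mul_le_mul_right h7 h9
  refine ⟨p, ?_⟩
  rintro ⟨g₁, g₂⟩ hg
  have hg₁ : g₁ ∈ Q₁ := ⟨(g₁, g₂), hg, rfl⟩
  have hg₂ : g₂ ∈ Q₂ := ⟨(g₁, g₂), hg, rfl⟩
  have hsplit : ρ (g₁, g₂) p + b (g₁, g₂) - p
      = ρ (g₁, 1) (ρ (1, g₂) p + b (1, g₂) - p) + (ρ (g₁, 1) p + b (g₁, 1) - p) := by
    have h := haction ρ b hcoc (g₁, (1 : G₂)) ((1 : G₁), g₂) p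
    have hm : ((g₁, (1 : G₂)) : G₁ × G₂) * ((1 : G₁), g₂) = (g₁, g₂) := by
      rw [Prod.mk_mul_mk, mul_one, one_mul]
    rw [hm] at h
    rw [← h, map_sub]
    abel
  calc ‖ρ (g₁, g₂) p + b (g₁, g₂) - p‖
      = ‖ρ (g₁, 1) (ρ (1, g₂) p + b (1, g₂) - p) + (ρ (g₁, 1) p + b (g₁, 1) - p)‖ := by
        rw [hsplit]
    _ ≤ ‖ρ (g₁, 1) (ρ (1, g₂) p + b (1, g₂) - p)‖ + ‖ρ (g₁, 1) p + b (g₁, 1) - p‖ :=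
        norm_add_le _ _
    _ = ‖ρ (1, g₂) p + b (1, g₂) - p‖ + ‖ρ (g₁, 1) p + b (g₁, 1) - p‖ := by
        rw [LinearIsometryEquiv.norm_map]
    _ ≤ δ + ‖ρ (g₁, 1) v₁ + b (g₁, 1) - v₁‖ := add_le_add (hpC g₂ hg₂) (hkey g₁)
    _ < δ + δ := by have := hv₁' g₁ hg₁; linarith
    _ < ε := by rw [hδdef]; linarith
end

section
/- Let ℤ act isometrically on ℓ¹(ℤ) by translation, (n·x)(k) = x(k−n), and let e₀ ∈ ℓ¹(ℤ) be the standard basis vector at 0. Then for every x ∈ ℓ¹(ℤ) one has ‖x − 1·x − e₀‖₁ ≥ 1. Consequently, the cocycle b ∈ Z¹(ℤ, ℓ¹(ℤ)) determined by b(1) = e₀ (so b(n) = e₀ + e₁ + … + e_{n−1} for n ≥ 1) is not in the closure of the coboundaries B¹(ℤ, ℓ¹(ℤ)) (closure in any topology finer than pointwise norm convergence), and hence H̄¹(ℤ, ℓ¹(ℤ)) ≠ 0. -/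
noncomputable section

/-- The "partial sum of singles" function: indicator of `[0,n)` minus indicator of `[n,0)`. -/
def vfun (n k : ℤ) : ℝ := if 0 ≤ k ∧ k < n then 1 else if n ≤ k ∧ k < 0 then -1 else 0

lemma vfun_mem (n : ℤ) : Memℓp (vfun n) 1 := by
  refine (memℓp_zero ?_).of_exponent_ge (by norm_num)
  apply Set.Finite.subset (Set.finite_Icc (min n 0) (max n 0))
  intro k hk
  simp only [Set.mem_setOf_eq, vfun] at hk
  simp only [Set.mem_Icc, le_max_iff, min_le_iff]
  split_ifs at hk with h1 h2 <;> [omega; omega; exact absurd rfl hk]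

def bB (n : ℤ) : lp (fun _ : ℤ => ℝ) 1 := ⟨vfun n, vfun_mem n⟩

lemma bB_apply (n k : ℤ) : (bB n : ∀ _ : ℤ, ℝ) k = vfun n k := rfl

theorem ell1_Z_cocycle_not_almost_coboundary
    (T : ℤ → (lp (fun _ : ℤ => ℝ) 1 ≃ₗᵢ[ℝ] lp (fun _ : ℤ => ℝ) 1))
    -- `T n` is translation by `n`:
    (hT : ∀ (n : ℤ) (x : lp (fun _ : ℤ => ℝ) 1) (k : ℤ), T n x k = x (k - n)) :
    -- (i) the pointwise estimate:
    (∀ x : lp (fun _ : ℤ => ℝ) 1, 1 ≤ ‖x - T 1 x - lp.single 1 (0 : ℤ) (1 : ℝ)‖) ∧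
    -- (ii) every cocycle `b` with `b 1 = e₀` avoids the closure of the coboundaries, in any
    -- topology finer than that of pointwise norm convergence:
    (∀ b : ℤ → lp (fun _ : ℤ => ℝ) 1,
      (∀ n m : ℤ, b (n + m) = b n + T n (b m)) → b 1 = lp.single 1 (0 : ℤ) (1 : ℝ) →
      ∀ t : TopologicalSpace (ℤ → lp (fun _ : ℤ => ℝ) 1), t ≤ Pi.topologicalSpace →
        b ∉ @closure _ t (Set.range fun x : lp (fun _ : ℤ => ℝ) 1 => fun n : ℤ => T n x - x)) ∧
    -- (iii) such a cocycle exists, hence `H̄¹(ℤ, ℓ¹(ℤ)) ≠ 0`: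
    (∃ b : ℤ → lp (fun _ : ℤ => ℝ) 1,
      (∀ n m : ℤ, b (n + m) = b n + T n (b m)) ∧ b 1 = lp.single 1 (0 : ℤ) (1 : ℝ) ∧
      b ∉ closure (Set.range fun x : lp (fun _ : ℤ => ℝ) 1 => fun n : ℤ => T n x - x)) := by
  have hone : (0 : ℝ) < (1 : ENNReal).toReal := by norm_num
  have hsummable : ∀ z : lp (fun _ : ℤ => ℝ) 1, Summable (fun k => ‖z k‖) := by
    intro z
    have := (memℓp_gen_iff hone).mp (lp.memℓp z)
    simpa using this
  -- (i)
  have key : ∀ x : lp (fun _ : ℤ => ℝ) 1,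
      1 ≤ ‖x - T 1 x - lp.single 1 (0 : ℤ) (1 : ℝ)‖ := by
    intro x
    set e0 : lp (fun _ : ℤ => ℝ) 1 := lp.single 1 (0 : ℤ) (1 : ℝ) with he0
    set y := x - T 1 x - e0 with hy
    have hyk : ∀ k : ℤ, (y : ∀ _ : ℤ, ℝ) k = x k - x (k - 1) - e0 k := by
      intro k
      simp [hy, lp.coeFn_sub, hT]
    have hny : Summable (fun k => ‖y k‖) := hsummable y
    have hsy : Summable (fun k : ℤ => y k) := hny.of_norm
    have hsx : Summable (fun k : ℤ => x k) := (hsummable x).of_norm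
    have hsx' : Summable (fun k : ℤ => x (k - 1)) :=
      (Equiv.subRight (1 : ℤ)).summable_iff.mpr hsx
    have hse : Summable (fun k : ℤ => e0 k) := (hsummable e0).of_norm
    have htx' : ∑' k : ℤ, x (k - 1) = ∑' k : ℤ, x k :=
      (Equiv.subRight (1 : ℤ)).tsum_eq (fun k => x k)
    have hte : ∑' k : ℤ, e0 k = 1 := by
      rw [tsum_eq_single (0 : ℤ) (fun b hb => lp.single_apply_ne _ _ _ hb)]
      exact lp.single_apply_self _ _ _
    have hty : ∑' k : ℤ, y k = -1 := by
      calc ∑' k : ℤ, y k = ∑' k : ℤ, (x k - x (k - 1) - e0 k) := tsum_congr hyk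
        _ = (∑' k : ℤ, (x k - x (k - 1))) - ∑' k : ℤ, e0 k :=
            Summable.tsum_sub (hsx.sub hsx') hse
        _ = ((∑' k : ℤ, x k) - ∑' k : ℤ, x (k - 1)) - ∑' k : ℤ, e0 k := by
            rw [Summable.tsum_sub hsx hsx']
        _ = -1 := by rw [htx', hte]; ring
    have hbound : ‖∑' k : ℤ, y k‖ ≤ ∑' k : ℤ, ‖y k‖ := norm_tsum_le_tsum_norm hny
    have hnorm : ‖y‖ = ∑' k : ℤ, ‖y k‖ := by
      rw [lp.norm_eq_tsum_rpow hone y]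
      simp
    rw [hty] at hbound
    rw [hnorm]
    simpa using hbound
  have part2 : ∀ b : ℤ → lp (fun _ : ℤ => ℝ) 1,
      (∀ n m : ℤ, b (n + m) = b n + T n (b m)) → b 1 = lp.single 1 (0 : ℤ) (1 : ℝ) →
      ∀ t : TopologicalSpace (ℤ → lp (fun _ : ℤ => ℝ) 1), t ≤ Pi.topologicalSpace →
        b ∉ @closure _ t (Set.range fun x : lp (fun _ : ℤ => ℝ) 1 => fun n : ℤ => T n x - x) := by
    intro b _ hb1 t ht hmem
    have hmem' : b ∈ @closure _ Pi.topologicalSpace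
        (Set.range fun x : lp (fun _ : ℤ => ℝ) 1 => fun n : ℤ => T n x - x) :=
      closure.mono ht hmem
    have hcont : @Continuous _ _ Pi.topologicalSpace _
        (fun g : ℤ → lp (fun _ : ℤ => ℝ) 1 => g 1) := continuous_apply 1
    have h1 : b 1 ∈ closure (Set.range fun x : lp (fun _ : ℤ => ℝ) 1 => T 1 x - x) := by
      refine @map_mem_closure _ _ Pi.topologicalSpace _ _ _ _ _ hcont hmem' ?_
      rintro g ⟨x, rfl⟩
      exact ⟨x, rfl⟩
    rw [hb1] at h1
    rw [Metric.mem_closure_iff] at h1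
    obtain ⟨z, ⟨x, rfl⟩, hz⟩ := h1 1 one_pos
    have heq : lp.single 1 (0 : ℤ) (1 : ℝ) - (T 1 x - x)
        = -((-x) - T 1 (-x) - lp.single 1 (0 : ℤ) (1 : ℝ)) := by
      rw [map_neg]; abel
    have h2 := key (-x)
    rw [dist_eq_norm, heq, norm_neg] at hz
    linarith
  have hcoc : ∀ n m : ℤ, bB (n + m) = bB n + T n (bB m) := by
    intro n m
    refine lp.ext (funext fun k => ?_)
    have h1 : ((bB n + T n (bB m)) : ∀ _ : ℤ, ℝ) k = vfun n k + vfun m (k - n) := by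
      simp [lp.coeFn_add, hT, bB_apply]
    show (bB (n + m) : ∀ _ : ℤ, ℝ) k = ((bB n + T n (bB m)) : ∀ _ : ℤ, ℝ) k
    rw [h1, bB_apply]
    simp only [vfun]
    split_ifs <;> first | omega | norm_num
  have hb1 : bB 1 = lp.single 1 (0 : ℤ) (1 : ℝ) := by
    refine lp.ext (funext fun k => ?_)
    show (bB 1 : ∀ _ : ℤ, ℝ) k = (lp.single 1 (0 : ℤ) (1 : ℝ) : ∀ _ : ℤ, ℝ) k
    rw [bB_apply]
    rcases eq_or_ne k 0 with rfl | hk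
    · rw [lp.single_apply_self]; simp [vfun]
    · rw [lp.single_apply_ne _ _ _ hk]
      simp only [vfun]
      split_ifs <;> first | omega | norm_num
  exact ⟨key, part2, bB, hcoc, hb1, part2 bB hcoc hb1 _ le_rfl⟩
end
end
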